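/- arXiv:2006.14537 — 6 statements merged into one kernel-verified Lean document; each statement's English description precedes it below -/
import Mathlib

section
/- Let a, b, c, d, θ, TD, TR, D, τᵢ be real numbers with a ≥ 0, b ≥ 0, 0 ≤ d ≤ c, τᵢ > 0 and 0 ≤ TD ≤ TR. Then for every pair of distinct states X, Y among the nine 2TR-periodic SHORT MAIN states {S, SB, SD, AP, AS, ASD, I, ID, IB}, with the two exceptions {X,Y} = {I, SB} and {X,Y} = {I, SD}, the existence-condition sets of X and of Y cannot be satisfied simultaneously. -/
/-!
Since `0 ≤ TD ≤ TR`, the decay factors are ordered `M⁺ ≤ M⁻ ≤ N⁺ ≤ N⁻`, and with `b ≥ 0` the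
quantities `b·M⁺ ≤ b·M⁻ ≤ b·N⁺ ≤ b·N⁻` are nonnegative. For every pair of states other than
{I, SB} and {I, SD}, one state demands some `Cₖ ≥ θ` and the other some `Cₗ < θ` where, by this
ordering together with `a ≥ 0` and `d ≤ c`, `Cₖ ≤ Cₗ`; so the two condition sets are linearly
inconsistent.
-/

/-- Existence conditions of the nine 2TR-periodic SHORT MAIN states
`S, SB, SD, AP, AS, ASD, I, ID, IB` (indexed `0,...,8` in this order). -/
noncomputable def shortMainCond (a b c d θ TD TR D τ : ℝ) : Fin 9 → Prop :=
  fun i =>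
    let Nm : ℝ := Real.exp (-(TR - TD - D) / τ)
    let Np : ℝ := Real.exp (-(TR - D) / τ)
    let Mm : ℝ := Real.exp (-(2 * TR - TD - D) / τ)
    let Mp : ℝ := Real.exp (-(2 * TR - D) / τ)
    match i with
    | ⟨0, _⟩ => d < θ ∧ a - b * Mp + d < θ ∧ c - b * Np < θ                 -- S
    | ⟨1, _⟩ => c - b * Np < θ ∧ d - b * Mm ≥ θ ∧ a - b * Mp < θ            -- SB
    | ⟨2, _⟩ => c - b * Mm ≥ θ ∧ a - b * Mm + d ≥ θ ∧ c - b * Np < θ ∧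
                d - b * Mm < θ ∧ a - b * Mp < θ                              -- SD
    | ⟨3, _⟩ => a - b * Mp + d < θ ∧ c - b * Nm ≥ θ                          -- AP
    | ⟨4, _⟩ => c - b * Nm ≥ θ ∧ a - b * Np + d < θ ∧ d - b * Mm ≥ θ ∧
                a - b * Np < θ                                               -- AS
    | ⟨5, _⟩ => a - b * Mm + d ≥ θ ∧ c - b * Nm ≥ θ ∧ a - b * Np + d < θ ∧
                d - b * Mm < θ ∧ a - b * Np < θ                              -- ASD
    | ⟨6, _⟩ => d ≥ θ ∧ a - b * Np + c < θ                                   -- I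
    | ⟨7, _⟩ => c - b * Nm ≥ θ ∧ a - b * Nm + d ≥ θ ∧ d - b * Nm < θ ∧
                a - b * Np < θ                                               -- ID
    | ⟨8, _⟩ => d - b * Nm ≥ θ ∧ a - b * Np < θ                              -- IB

theorem weighted_decay_factors_chain {b τ TD TR D : ℝ} (hb : 0 ≤ b) (hτ : 0 < τ) (hTD0 : 0 ≤ TD)
    (hTDTR : TD ≤ TR) :
    0 ≤ b * Real.exp (-(2 * TR - D) / τ) ∧
      b * Real.exp (-(2 * TR - D) / τ) ≤ b * Real.exp (-(2 * TR - TD - D) / τ) ∧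
      b * Real.exp (-(2 * TR - TD - D) / τ) ≤ b * Real.exp (-(TR - D) / τ) ∧
      b * Real.exp (-(TR - D) / τ) ≤ b * Real.exp (-(TR - TD - D) / τ) := by
  refine ⟨by positivity, ?_, ?_, ?_⟩ <;> gcongr <;> linarith

theorem shortMain_no_coexistence_general
    (a b c d θ TD TR D τ : ℝ)
    (ha : 0 ≤ a) (hb : 0 ≤ b) (hdc : d ≤ c)
    (hτ : 0 < τ) (hTD0 : 0 ≤ TD) (hTDTR : TD ≤ TR) :
    ∀ i j : Fin 9, i ≠ j →
      ({i, j} : Finset (Fin 9)) ≠ ({6, 1} : Finset (Fin 9)) →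
      ({i, j} : Finset (Fin 9)) ≠ ({6, 2} : Finset (Fin 9)) →
      ¬(shortMainCond a b c d θ TD TR D τ i ∧ shortMainCond a b c d θ TD TR D τ j) := by
  rintro i j hij hI_SB hI_SD ⟨hi, hj⟩
  obtain ⟨hM₀, hMM, hMN, hNN⟩ := weighted_decay_factors_chain (D := D) hb hτ hTD0 hTDTR
  fin_cases i <;> fin_cases j <;>
    first
      | exact hij rfl
      | exact hI_SB (by decide)
      | exact hI_SD (by decide)
      | (simp only [shortMainCond] at hi hj
         casesm* _ ∧ _
         linarith)

/-- Multistability theorem: except for the pairs {I, SB} (indices {6,1}) and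
{I, SD} (indices {6,2}), no two distinct 2TR-periodic SHORT MAIN states can
have their existence conditions satisfied simultaneously. -/
theorem shortMain_no_coexistence
    (a b c d θ TD TR D τ : ℝ)
    (ha : 0 ≤ a) (hb : 0 ≤ b) (hd0 : 0 ≤ d) (hdc : d ≤ c)
    (hτ : 0 < τ) (hTD0 : 0 ≤ TD) (hTDTR : TD ≤ TR) :
    ∀ i j : Fin 9, i ≠ j →
      ({i, j} : Finset (Fin 9)) ≠ ({6, 1} : Finset (Fin 9)) →
      ({i, j} : Finset (Fin 9)) ≠ ({6, 2} : Finset (Fin 9)) →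
      ¬(shortMainCond a b c d θ TD TR D τ i ∧ shortMainCond a b c d θ TD TR D τ j) :=
  shortMain_no_coexistence_general a b c d θ TD TR D τ ha hb hdc hτ hTD0 hTDTR
end

section
/- There exist real numbers a, b, c, d, θ, TD, TR, D, τᵢ with a ≥ 0, b ≥ 0, 0 ≤ d ≤ c, θ > 0, τᵢ > 0, 0 < TD < D and TD + D < TR such that the existence conditions of the state I (namely C₁ ≥ θ and C₆⁺ < θ) and the existence conditions of the state SB (namely C₃⁺ < θ, C₈⁻ ≥ θ and C₉ < θ) hold simultaneously; that is, the integrated state I can coexist with the segregated state SB. -/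
/-! Because `TD < TR`, the decay factor `M⁻` is strictly smaller than `N⁺`. Taking `a = 0` and
`c = d = θ + b·M⁻` makes `C₈⁻ = θ` exactly, while `C₃⁺ = C₆⁺ = θ − b·(N⁺ − M⁻) < θ` for any
`b > 0`; `C₉ = −b·M⁺` is negative and `C₁ = d ≥ θ` is immediate. -/

open Real

lemma exp_neg_two_period_lt {τ TD TR D : ℝ} (hτ : 0 < τ) (h : TD < TR) :
    exp (-(2 * TR - TD - D) / τ) < exp (-(TR - D) / τ) :=
  exp_lt_exp.mpr (div_lt_div_of_pos_right (by linarith) hτ)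

/-- The integrated state `I` (conditions `C₁ ≥ θ` and `C₆⁺ < θ`) can coexist with the
segregated state `SB` (conditions `C₃⁺ < θ`, `C₈⁻ ≥ θ` and `C₉ < θ`), where
`N⁺ = exp(−(TR−D)/τᵢ)`, `M⁻ = exp(−(2TR−TD−D)/τᵢ)`, `M⁺ = exp(−(2TR−D)/τᵢ)`,
`C₁ = d`, `C₃⁺ = c − b·N⁺`, `C₆⁺ = a − b·N⁺ + c`, `C₈⁻ = d − b·M⁻`, `C₉ = a − b·M⁺`. -/
theorem coexistence_I_SB :
    ∃ a b c d θ TD TR D τ : ℝ,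
      0 ≤ a ∧ 0 ≤ b ∧ 0 ≤ d ∧ d ≤ c ∧ 0 < θ ∧ 0 < τ ∧
      0 < TD ∧ TD < D ∧ TD + D < TR ∧
      -- existence conditions of the state I
      (d ≥ θ ∧ a - b * Real.exp (-(TR - D) / τ) + c < θ) ∧
      -- existence conditions of the state SB
      (c - b * Real.exp (-(TR - D) / τ) < θ ∧
       d - b * Real.exp (-(2 * TR - TD - D) / τ) ≥ θ ∧
       a - b * Real.exp (-(2 * TR - D) / τ) < θ) := by
  have hM : exp (-(2 * 4 - 1 - 2) / 1) < exp (-(4 - 2) / 1) :=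
    exp_neg_two_period_lt one_pos (by norm_num)
  have hM_pos := exp_pos (-(2 * 4 - 1 - 2) / 1)
  have hMplus_pos := exp_pos (-(2 * 4 - 2) / 1)
  refine ⟨0, 1, 1 + exp (-(2 * 4 - 1 - 2) / 1), 1 + exp (-(2 * 4 - 1 - 2) / 1), 1, 1, 4, 2, 1,
    le_rfl, zero_le_one, by positivity, le_rfl, one_pos, one_pos, one_pos, by norm_num,
    by norm_num, ⟨by linarith, by linarith⟩, by linarith, by linarith, by linarith⟩
end

section
/- There exist real numbers a, b, c, d, θ, TD, TR, D, τᵢ with a ≥ 0, b ≥ 0, 0 ≤ d ≤ c, θ > 0, τᵢ > 0, 0 < TD < D and TD + D < TR such that the existence conditions of the state I (namely C₁ ≥ θ and C₆⁺ < θ) and the existence conditions of the state SD (namely C₄⁻ ≥ θ, C₂⁻ ≥ θ, C₃⁺ < θ, C₈⁻ < θ and C₉ < θ) hold simultaneously; that is, the integrated state I can coexist with the segregated state SD. -/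
open Real

def IAndSDCoexist (a b c d θ TD TR D τ : ℝ) : Prop :=
  (d ≥ θ ∧ a - b * exp (-(TR - D) / τ) + c < θ) ∧
  (c - b * exp (-(2 * TR - TD - D) / τ) ≥ θ ∧
   a - b * exp (-(2 * TR - TD - D) / τ) + d ≥ θ ∧
   c - b * exp (-(TR - D) / τ) < θ ∧
   d - b * exp (-(2 * TR - TD - D) / τ) < θ ∧
   a - b * exp (-(2 * TR - D) / τ) < θ)

lemma exp_div_mul_exp_neg_div (s x τ : ℝ) :
    exp (s / τ) * exp (-x / τ) = exp ((s - x) / τ) := by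
  rw [← exp_add]; ring_nf

/-- Scaling `b` so that `b·M⁻ = θ`, the choice `a = d = θ`, `c = 2θ` meets every condition
except `C₆⁺ < θ`, which becomes `b·N⁺ = θ·exp((TR − TD)/τ) > 2θ`. -/
lemma iAndSDCoexist_of_two_lt_exp {θ TD TR D τ : ℝ} (hθ : 0 < θ)
    (hdecay : 2 < exp ((TR - TD) / τ)) :
    IAndSDCoexist θ (θ * exp ((2 * TR - TD - D) / τ)) (2 * θ) θ θ TD TR D τ := by
  have hM : θ * exp ((2 * TR - TD - D) / τ) * exp (-(2 * TR - TD - D) / τ) = θ := by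
    rw [mul_assoc, exp_div_mul_exp_neg_div, sub_self, zero_div, exp_zero, mul_one]
  have hN : θ * exp ((2 * TR - TD - D) / τ) * exp (-(TR - D) / τ)
      = θ * exp ((TR - TD) / τ) := by
    rw [mul_assoc, exp_div_mul_exp_neg_div]; ring_nf
  have hN_gt : 2 * θ < θ * exp ((TR - TD) / τ) := by
    linarith [mul_lt_mul_of_pos_left hdecay hθ]
  have hP : 0 < θ * exp ((2 * TR - TD - D) / τ) * exp (-(2 * TR - D) / τ) := by positivity
  refine ⟨⟨le_rfl, ?_⟩, ?_, ?_, ?_, ?_, ?_⟩ <;> linarith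

/-- The integrated state `I` (conditions `C₁ ≥ θ` and `C₆⁺ < θ`) can coexist with the
segregated state `SD` (conditions `C₄⁻ ≥ θ`, `C₂⁻ ≥ θ`, `C₃⁺ < θ`, `C₈⁻ < θ`, `C₉ < θ`),
where `N⁺ = exp(−(TR−D)/τᵢ)`, `M⁻ = exp(−(2TR−TD−D)/τᵢ)`, `M⁺ = exp(−(2TR−D)/τᵢ)`,
`C₁ = d`, `C₂⁻ = a − b·M⁻ + d`, `C₃⁺ = c − b·N⁺`, `C₄⁻ = c − b·M⁻`,
`C₆⁺ = a − b·N⁺ + c`, `C₈⁻ = d − b·M⁻`, `C₉ = a − b·M⁺`. -/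
theorem coexistence_I_SD :
    ∃ a b c d θ TD TR D τ : ℝ,
      0 ≤ a ∧ 0 ≤ b ∧ 0 ≤ d ∧ d ≤ c ∧ 0 < θ ∧ 0 < τ ∧
      0 < TD ∧ TD < D ∧ TD + D < TR ∧
      -- existence conditions of the state I
      (d ≥ θ ∧ a - b * Real.exp (-(TR - D) / τ) + c < θ) ∧
      -- existence conditions of the state SD
      (c - b * Real.exp (-(2 * TR - TD - D) / τ) ≥ θ ∧
       a - b * Real.exp (-(2 * TR - TD - D) / τ) + d ≥ θ ∧
       c - b * Real.exp (-(TR - D) / τ) < θ ∧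
       d - b * Real.exp (-(2 * TR - TD - D) / τ) < θ ∧
       a - b * Real.exp (-(2 * TR - D) / τ) < θ) := by
  have hdecay : 2 < exp (((4 : ℝ) - 1) / 1) := by
    have := add_one_lt_exp (show ((4 : ℝ) - 1) / 1 ≠ 0 by norm_num)
    norm_num at this ⊢; linarith
  refine ⟨1, 1 * exp ((2 * 4 - 1 - 2) / 1), 2 * 1, 1, 1, 1, 4, 2, 1, by norm_num,
    by positivity, by norm_num, by norm_num, by norm_num, by norm_num, by norm_num,
    by norm_num, by norm_num, iAndSDCoexist_of_two_lt_exp one_pos hdecay⟩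
end

section
/- Let b, c, d, θ, N⁻, M⁻ be real numbers with b ≥ 0, 0 ≤ d ≤ c and 0 ≤ M⁻ ≤ N⁻, and let y_A¹, y_A², y_B¹, y_B² ∈ {0,1}. Define s_B^{1−} = N⁻·y_B² + M⁻·(1−y_B²)·y_B¹, s_B^{2−} = N⁻·y_B¹ + M⁻·(1−y_B¹)·y_B², s_A^{1−} = N⁻·y_A² + M⁻·(1−y_A²)·y_A¹, s_A^{2−} = N⁻·y_A¹ + M⁻·(1−y_A¹)·y_A², and x_A¹ = H_θ(c − b·s_B^{1−}), x_A² = H_θ(d − b·s_B^{2−}), x_B¹ = H_θ(d − b·s_A^{1−}), x_B² = H_θ(c − b·s_A^{2−}). Assume x_A^i ≤ y_A^i and x_B^i ≤ y_B^i for i = 1, 2. Then: (1) y_A¹ = y_B² = 1 implies x_A¹ = x_B², and y_A² = y_B¹ = 1 implies x_A² = x_B¹; (2) y_B¹ = y_B² implies x_A¹ ≥ x_A², and y_A¹ = y_A² implies x_B² ≥ x_B¹; (3) y_A² = 1 implies x_B¹ ≤ r for each r among the eight values x_A¹, y_A¹, x_A², y_A², x_B¹, y_B¹, x_B², y_B²,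 and y_B¹ = 1 implies x_A² ≤ r for each such r; (4) if y_A² = y_B² and y_A¹ = y_B¹ then x_A¹ ≥ x_B¹ and x_B² ≥ x_A². -/
/-!
Every entry is `H_θ(e - b s)` with drive `e ∈ {c, d}`, `d ≤ c`, and delayed synaptic value
`s ≤ N⁻` (because the activities are `0`/`1` and `M⁻ ≤ N⁻`). Since `H_θ` is monotone and
`b ≥ 0`, a smaller drive or a larger synaptic value gives a smaller entry. An active preceding
interval saturates the synapse at `N⁻`, so the corresponding entry `H_θ(d - b N⁻)` has the
smallest possible argument and lies below all others; in the remaining cases the two entries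
compared share their synaptic value, or both equal `H_θ(c - b N⁻)`.
-/

/-- Heaviside gain function with threshold θ: `H_θ(x) = 1` if `x ≥ θ`, else `0`. -/
noncomputable def Hs (θ x : ℝ) : ℝ := if θ ≤ x then 1 else 0

theorem Hs_monotone (θ : ℝ) : Monotone (Hs θ) := fun x y hxy => by
  unfold Hs
  split_ifs with hx hy <;> norm_num
  exact hy (hx.trans hxy)

theorem Hs_sub_mul_le_Hs_sub_mul {θ b c d s s' : ℝ} (hb : 0 ≤ b) (hdc : d ≤ c) (hs : s ≤ s') :
    Hs θ (d - b * s') ≤ Hs θ (c - b * s) :=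
  Hs_monotone θ (by nlinarith)

/-- `y'` is the activity in the preceding interval and `y` the activity in the current one. -/
def delayedSynapse (N M y y' : ℝ) : ℝ := N * y' + M * (1 - y') * y

theorem delayedSynapse_le {N M y y' : ℝ} (hM : 0 ≤ M) (hMN : M ≤ N)
    (hy : y = 0 ∨ y = 1) (hy' : y' = 0 ∨ y' = 1) : delayedSynapse N M y y' ≤ N := by
  unfold delayedSynapse
  rcases hy with rfl | rfl <;> rcases hy' with rfl | rfl <;> linarith

theorem delayedSynapse_of_eq_one {N M y y' : ℝ} (hy' : y' = 1) : delayedSynapse N M y y' = N := by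
  simp [delayedSynapse, hy']

theorem shortMain_matrix_structure_general
    (b c d θ Nm Mm yA1 yA2 yB1 yB2 : ℝ)
    (hb : 0 ≤ b) (hdc : d ≤ c) (hM0 : 0 ≤ Mm) (hMN : Mm ≤ Nm)
    (hyA1 : yA1 = 0 ∨ yA1 = 1) (hyA2 : yA2 = 0 ∨ yA2 = 1)
    (hyB1 : yB1 = 0 ∨ yB1 = 1) (hyB2 : yB2 = 0 ∨ yB2 = 1)
    (sB1 sB2 sA1 sA2 xA1 xA2 xB1 xB2 : ℝ)
    (hsB1 : sB1 = Nm * yB2 + Mm * (1 - yB2) * yB1)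
    (hsB2 : sB2 = Nm * yB1 + Mm * (1 - yB1) * yB2)
    (hsA1 : sA1 = Nm * yA2 + Mm * (1 - yA2) * yA1)
    (hsA2 : sA2 = Nm * yA1 + Mm * (1 - yA1) * yA2)
    (hxA1 : xA1 = Hs θ (c - b * sB1))
    (hxA2 : xA2 = Hs θ (d - b * sB2))
    (hxB1 : xB1 = Hs θ (d - b * sA1))
    (hxB2 : xB2 = Hs θ (c - b * sA2))
    (h1 : xA1 ≤ yA1) (h2 : xA2 ≤ yA2) (h3 : xB1 ≤ yB1) (h4 : xB2 ≤ yB2) :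
    -- (1)
    ((yA1 = 1 ∧ yB2 = 1 → xA1 = xB2) ∧ (yA2 = 1 ∧ yB1 = 1 → xA2 = xB1)) ∧
    -- (2)
    ((yB1 = yB2 → xA2 ≤ xA1) ∧ (yA1 = yA2 → xB1 ≤ xB2)) ∧
    -- (3)
    ((yA2 = 1 → xB1 ≤ xA1 ∧ xB1 ≤ yA1 ∧ xB1 ≤ xA2 ∧ xB1 ≤ yA2 ∧
                 xB1 ≤ xB1 ∧ xB1 ≤ yB1 ∧ xB1 ≤ xB2 ∧ xB1 ≤ yB2) ∧
     (yB1 = 1 → xA2 ≤ xA1 ∧ xA2 ≤ yA1 ∧ xA2 ≤ xA2 ∧ xA2 ≤ yA2 ∧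
                 xA2 ≤ xB1 ∧ xA2 ≤ yB1 ∧ xA2 ≤ xB2 ∧ xA2 ≤ yB2)) ∧
    -- (4)
    ((yA2 = yB2 ∧ yA1 = yB1) → (xB1 ≤ xA1 ∧ xA2 ≤ xB2)) := by
  subst hxA1 hxA2 hxB1 hxB2
  have hsB1N : sB1 ≤ Nm := hsB1 ▸ delayedSynapse_le hM0 hMN hyB1 hyB2
  have hsB2N : sB2 ≤ Nm := hsB2 ▸ delayedSynapse_le hM0 hMN hyB2 hyB1
  have hsA1N : sA1 ≤ Nm := hsA1 ▸ delayedSynapse_le hM0 hMN hyA1 hyA2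
  have hsA2N : sA2 ≤ Nm := hsA2 ▸ delayedSynapse_le hM0 hMN hyA2 hyA1
  have key {e e' s s'} (he : e' ≤ e) (hs : s ≤ s') := Hs_sub_mul_le_Hs_sub_mul (θ := θ) hb he hs
  refine ⟨⟨?_, ?_⟩, ⟨?_, ?_⟩, ⟨?_, ?_⟩, ?_⟩
  · rintro ⟨hA1, hB2⟩
    rw [hsB1.trans (delayedSynapse_of_eq_one hB2), hsA2.trans (delayedSynapse_of_eq_one hA1)]
  · rintro ⟨hA2, hB1⟩
    rw [hsB2.trans (delayedSynapse_of_eq_one hB1), hsA1.trans (delayedSynapse_of_eq_one hA2)]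
  · intro hB
    exact key hdc (by rw [hsB1, hsB2, hB])
  · intro hA
    exact key hdc (by rw [hsA1, hsA2, hA])
  · intro hA2
    have low {e s} (he : d ≤ e) (hs : s ≤ Nm) : Hs θ (d - b * sA1) ≤ Hs θ (e - b * s) := by
      rw [hsA1.trans (delayedSynapse_of_eq_one hA2)]
      exact key he hs
    exact ⟨low hdc hsB1N, (low hdc hsB1N).trans h1, low le_rfl hsB2N, (low le_rfl hsB2N).trans h2,
      le_rfl, h3, low hdc hsA2N, (low hdc hsA2N).trans h4⟩
  · intro hB1
    have low {e s} (he : d ≤ e) (hs : s ≤ Nm) : Hs θ (d - b * sB2) ≤ Hs θ (e - b * s) := by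
      rw [hsB2.trans (delayedSynapse_of_eq_one hB1)]
      exact key he hs
    exact ⟨low hdc hsB1N, (low hdc hsB1N).trans h1, le_rfl, h2, low le_rfl hsA1N,
      (low le_rfl hsA1N).trans h3, low hdc hsA2N, (low hdc hsA2N).trans h4⟩
  · rintro ⟨hy2, hy1⟩
    exact ⟨key hdc (by rw [hsA1, hsB1, hy1, hy2]), key hdc (by rw [hsA2, hsB2, hy1, hy2])⟩

/-- Structural conditions (1)–(4) satisfied by the matrix-form entries of
2TR-periodic SHORT MAIN states. -/
theorem shortMain_matrix_structure
    (b c d θ Nm Mm yA1 yA2 yB1 yB2 : ℝ)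
    (hb : 0 ≤ b) (hd0 : 0 ≤ d) (hdc : d ≤ c) (hM0 : 0 ≤ Mm) (hMN : Mm ≤ Nm)
    (hyA1 : yA1 = 0 ∨ yA1 = 1) (hyA2 : yA2 = 0 ∨ yA2 = 1)
    (hyB1 : yB1 = 0 ∨ yB1 = 1) (hyB2 : yB2 = 0 ∨ yB2 = 1)
    (sB1 sB2 sA1 sA2 xA1 xA2 xB1 xB2 : ℝ)
    (hsB1 : sB1 = Nm * yB2 + Mm * (1 - yB2) * yB1)
    (hsB2 : sB2 = Nm * yB1 + Mm * (1 - yB1) * yB2)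
    (hsA1 : sA1 = Nm * yA2 + Mm * (1 - yA2) * yA1)
    (hsA2 : sA2 = Nm * yA1 + Mm * (1 - yA1) * yA2)
    (hxA1 : xA1 = Hs θ (c - b * sB1))
    (hxA2 : xA2 = Hs θ (d - b * sB2))
    (hxB1 : xB1 = Hs θ (d - b * sA1))
    (hxB2 : xB2 = Hs θ (c - b * sA2))
    (h1 : xA1 ≤ yA1) (h2 : xA2 ≤ yA2) (h3 : xB1 ≤ yB1) (h4 : xB2 ≤ yB2) :
    -- (1)
    ((yA1 = 1 ∧ yB2 = 1 → xA1 = xB2) ∧ (yA2 = 1 ∧ yB1 = 1 → xA2 = xB1)) ∧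
    -- (2)
    ((yB1 = yB2 → xA2 ≤ xA1) ∧ (yA1 = yA2 → xB1 ≤ xB2)) ∧
    -- (3)
    ((yA2 = 1 → xB1 ≤ xA1 ∧ xB1 ≤ yA1 ∧ xB1 ≤ xA2 ∧ xB1 ≤ yA2 ∧
                 xB1 ≤ xB1 ∧ xB1 ≤ yB1 ∧ xB1 ≤ xB2 ∧ xB1 ≤ yB2) ∧
     (yB1 = 1 → xA2 ≤ xA1 ∧ xA2 ≤ yA1 ∧ xA2 ≤ xA2 ∧ xA2 ≤ yA2 ∧
                 xA2 ≤ xB1 ∧ xA2 ≤ yB1 ∧ xA2 ≤ xB2 ∧ xA2 ≤ yB2)) ∧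
    -- (4)
    ((yA2 = yB2 ∧ yA1 = yB1) → (xB1 ≤ xA1 ∧ xA2 ≤ xB2)) :=
  shortMain_matrix_structure_general b c d θ Nm Mm yA1 yA2 yB1 yB2 hb hdc hM0 hMN hyA1 hyA2 hyB1
    hyB2 sB1 sB2 sA1 sA2 xA1 xA2 xB1 xB2 hsB1 hsB2 hsA1 hsA2 hxA1 hxA2 hxB1 hxB2 h1 h2 h3 h4
end

section
/- Let a, b, c, d, θ and s̃_A, s̃_B be real numbers with a ≥ 0, and define F : ℝ² → ℝ² by F(u_A, u_B) = (−u_A + H_θ(a·u_B − b·s̃_B + c), −u_B + H_θ(a·u_A − b·s̃_A + d)). Then: (i) if F(1,0) = (0,0), then F(0,0) ≠ (0,0), F(0,1) ≠ (0,0) and F(1,1) ≠ (0,0); (ii) if F(0,1) = (0,0), then F(0,0) ≠ (0,0), F(1,0) ≠ (0,0) and F(1,1) ≠ (0,0); (iii) if both F(0,0) = (0,0) and F(1,1) = (0,0), then a > 0. -/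
/-- Vector field of the fast subsystem during an active tone interval, with
frozen delayed synaptic values `s̃_A`, `s̃_B`. -/
noncomputable def fastF (a b c d θ sA sB : ℝ) (u : ℝ × ℝ) : ℝ × ℝ :=
  (-u.1 + Hs θ (a * u.2 - b * sB + c), -u.2 + Hs θ (a * u.1 - b * sA + d))

/-!
A point `u` is an equilibrium iff `u.1 = H_θ(a u.2 + p)` and `u.2 = H_θ(a u.1 + q)`, where
`p = c - b s̃_B` and `q = d - b s̃_A`. At the corners of the unit square this pins down on which
side of `θ` each of `p`, `q`, `a + p`, `a + q` lies; two equilibria sharing a coordinate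
demand opposite sides for the same number, and `(1,0)` together with `(0,1)` would need
`q ≥ θ > a + q`, impossible for `a ≥ 0`. The case of `(0,1)` is the mirror image of `(1,0)`
under swapping the two populations.
-/

theorem Hs_eq_one_iff {θ x : ℝ} : Hs θ x = 1 ↔ θ ≤ x := by
  unfold Hs
  split_ifs <;> simp [*]

theorem Hs_eq_zero_iff {θ x : ℝ} : Hs θ x = 0 ↔ x < θ := by
  unfold Hs
  split_ifs <;> simp_all

section FastSubsystem

variable {a b c d θ sA sB : ℝ}

theorem fastF_eq_zero_iff {u : ℝ × ℝ} :
    fastF a b c d θ sA sB u = (0, 0) ↔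
      Hs θ (a * u.2 - b * sB + c) = u.1 ∧ Hs θ (a * u.1 - b * sA + d) = u.2 := by
  simp only [fastF, Prod.mk.injEq, neg_add_eq_zero, eq_comm (a := u.1), eq_comm (a := u.2)]

theorem fastF_swap (u : ℝ × ℝ) :
    fastF a b d c θ sB sA u.swap = (fastF a b c d θ sA sB u).swap :=
  rfl

theorem fastF_swap_eq_zero_iff {u : ℝ × ℝ} :
    fastF a b d c θ sB sA u.swap = (0, 0) ↔ fastF a b c d θ sA sB u = (0, 0) := by
  rw [fastF_swap, ← Prod.swap_inj, Prod.swap_swap, Prod.swap_prod_mk]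

theorem fastF_ne_zero_of_fastF_one_zero (ha : 0 ≤ a)
    (h : fastF a b c d θ sA sB (1, 0) = (0, 0)) :
    fastF a b c d θ sA sB (0, 0) ≠ (0, 0) ∧
      fastF a b c d θ sA sB (0, 1) ≠ (0, 0) ∧
      fastF a b c d θ sA sB (1, 1) ≠ (0, 0) := by
  simp only [ne_eq, fastF_eq_zero_iff, mul_zero, mul_one, Hs_eq_one_iff,
    Hs_eq_zero_iff] at h ⊢
  refine ⟨?_, ?_, ?_⟩ <;> intro h' <;> linarith [h.1, h.2, h'.1, h'.2]

theorem pos_of_fastF_zero_zero_of_fastF_one_one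
    (h : fastF a b c d θ sA sB (0, 0) = (0, 0) ∧ fastF a b c d θ sA sB (1, 1) = (0, 0)) :
    0 < a := by
  simp only [fastF_eq_zero_iff, mul_zero, mul_one, Hs_eq_one_iff, Hs_eq_zero_iff] at h
  linarith [h.1.1, h.2.1]

end FastSubsystem

/-- The equilibria `(1,0)` and `(0,1)` of the fast subsystem cannot coexist with
any other equilibrium, and coexistence of `(0,0)` and `(1,1)` requires `a > 0`. -/
theorem fast_equilibria_coexistence (a b c d θ sA sB : ℝ) (ha : 0 ≤ a) :
    (fastF a b c d θ sA sB (1, 0) = (0, 0) →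
      fastF a b c d θ sA sB (0, 0) ≠ (0, 0) ∧
      fastF a b c d θ sA sB (0, 1) ≠ (0, 0) ∧
      fastF a b c d θ sA sB (1, 1) ≠ (0, 0)) ∧
    (fastF a b c d θ sA sB (0, 1) = (0, 0) →
      fastF a b c d θ sA sB (0, 0) ≠ (0, 0) ∧
      fastF a b c d θ sA sB (1, 0) ≠ (0, 0) ∧
      fastF a b c d θ sA sB (1, 1) ≠ (0, 0)) ∧
    (fastF a b c d θ sA sB (0, 0) = (0, 0) ∧ fastF a b c d θ sA sB (1, 1) = (0, 0) →
      0 < a) := by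
  refine ⟨fastF_ne_zero_of_fastF_one_zero ha, fun h => ?_,
    pos_of_fastF_zero_zero_of_fastF_one_one⟩
  have mirrored := fastF_ne_zero_of_fastF_one_zero (c := d) (d := c) (sA := sB) (sB := sA) ha
    (fastF_swap_eq_zero_iff (u := (0, 1)) |>.2 h)
  exact ⟨fun h₀ => mirrored.1 (fastF_swap_eq_zero_iff.2 h₀),
    fun h₁ => mirrored.2.1 (fastF_swap_eq_zero_iff.2 h₁),
    fun h₂ => mirrored.2.2 (fastF_swap_eq_zero_iff.2 h₂)⟩
end

section
/- Let s₁, s₂ be real numbers with 0 < s₁ < 1 and 0 < s₂ ≤ 1, and let u_A⁰, u_B⁰ be real numbers with 0 ≤ u_A⁰ < s₁ and u_B⁰ > (u_A⁰ − 1)·s₂/(s₁ − 1). Then for every t ≥ 0 such that 1 − (1 − u_A⁰)·exp(−t) ≤ s₁, one has u_B⁰·exp(−t) > s₂·((1 − (1 − u_A⁰)·exp(−t)) − 1)/(s₁ − 1), and in particular u_B⁰·exp(−t) > s₂. -/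
/-!
The separatrix of the saddle `(s₁, s₂)` is a straight line through `(1, 0)`, and the flow
`(u_A, u_B) ↦ (1 - (1 - u_A) c, u_B c)` with `c = e^{-t}` is the homothety of ratio `c` centred
at `(1, 0)`. It therefore maps the half-plane above the separatrix into itself, and on the
separatrix `u_B ≥ s₂` as long as `u_A ≤ s₁`.
-/

noncomputable def separatrix (s1 s2 u : ℝ) : ℝ := s2 * (u - 1) / (s1 - 1)

lemma separatrix_one_sub_mul (s1 s2 u c : ℝ) :
    separatrix s1 s2 (1 - (1 - u) * c) = c * separatrix s1 s2 u := by
  unfold separatrix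
  ring

lemma separatrix_lt_mul_of_separatrix_lt {s1 s2 u v c : ℝ} (hc : 0 < c)
    (hv : separatrix s1 s2 u < v) : separatrix s1 s2 (1 - (1 - u) * c) < v * c := by
  rw [separatrix_one_sub_mul, mul_comm c]
  exact mul_lt_mul_of_pos_right hv hc

lemma le_separatrix {s1 s2 u : ℝ} (hs1 : s1 < 1) (hs2 : 0 ≤ s2) (hu : u ≤ s1) :
    s2 ≤ separatrix s1 s2 u := by
  rw [separatrix, le_div_iff_of_neg (by linarith)]
  nlinarith

theorem separatrix_trajectories_general
    (s1 s2 uA0 uB0 : ℝ)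
    (hs1' : s1 < 1) (hs2 : 0 < s2)
    (huB0 : uB0 > (uA0 - 1) * s2 / (s1 - 1)) :
    ∀ t : ℝ, 0 ≤ t → 1 - (1 - uA0) * Real.exp (-t) ≤ s1 →
      uB0 * Real.exp (-t) >
        s2 * ((1 - (1 - uA0) * Real.exp (-t)) - 1) / (s1 - 1) ∧
      uB0 * Real.exp (-t) > s2 := by
  intro t _ huA
  have habove : separatrix s1 s2 (1 - (1 - uA0) * Real.exp (-t)) < uB0 * Real.exp (-t) :=
    separatrix_lt_mul_of_separatrix_lt (Real.exp_pos _) (by rwa [separatrix, mul_comm s2])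
  exact ⟨habove, (le_separatrix hs1' hs2.le huA).trans_lt habove⟩

/-- Trajectories of the fast subsystem starting above the separatrix of the
degenerate saddle `(s₁, s₂)` with `u_A⁰ < s₁` remain above the separatrix while
`u_A ≤ s₁`, and in particular stay above `s₂`. -/
theorem separatrix_trajectories
    (s1 s2 uA0 uB0 : ℝ)
    (hs1 : 0 < s1) (hs1' : s1 < 1) (hs2 : 0 < s2) (hs2' : s2 ≤ 1)
    (huA0 : 0 ≤ uA0) (huA0' : uA0 < s1)
    (huB0 : uB0 > (uA0 - 1) * s2 / (s1 - 1)) :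
    ∀ t : ℝ, 0 ≤ t → 1 - (1 - uA0) * Real.exp (-t) ≤ s1 →
      uB0 * Real.exp (-t) >
        s2 * ((1 - (1 - uA0) * Real.exp (-t)) - 1) / (s1 - 1) ∧
      uB0 * Real.exp (-t) > s2 :=
  separatrix_trajectories_general s1 s2 uA0 uB0 hs1' hs2 huB0
end
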